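/- Let 0 < γ < 1 and let k be a kernel on ℝ^n × ℝ^n satisfying the Dini-type smoothness condition with modulus ω. Then there is a constant c, depending only on n, γ and the kernel constant, such that for every cube Q with center x_Q and every locally integrable f for which the integrals below converge absolutely, writing f_2 = f·1_{(2Q)^c} and Tf_2(u) = ∫_{(2Q)^c} k(u,y) f(y) dy, one has for every z ∈ Q: |Tf_2(z) − Tf_2(x_Q)| ≤ c (∫_0^1 ω(c_n t) dt/t) · inf_{y ∈ Q} M_γ f(y). -/

import Mathlib

open MeasureTheory Set Real ENNReal Filter

noncomputable section

/-- The axis-parallel closed cube in `ℝⁿ` centered at `c` with side length `l`. -/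
def cube (n : ℕ) (c : Fin n → ℝ) (l : ℝ) : Set (Fin n → ℝ) :=
  {y | ∀ i, |y i - c i| ≤ l / 2}

/-- The `ℝ≥0∞`-valued fractional maximal function `M_{γ,r} f`:
`sup_{Q ∋ x} |Q|^γ ((1/|Q|) ∫_Q |f|^r)^{1/r}`. -/
def fracMax (n : ℕ) (γ r : ℝ) (f : (Fin n → ℝ) → ℝ) (x : Fin n → ℝ) : ℝ≥0∞ :=
  ⨆ (c : Fin n → ℝ) (l : ℝ) (_ : 0 < l) (_ : x ∈ cube n c l),
    volume (cube n c l) ^ γ *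
      ((volume (cube n c l))⁻¹ * ∫⁻ y in cube n c l, ENNReal.ofReal |f y| ^ r) ^ (1 / r)

/-- The local sharp maximal function `M^♯_{0,s,Q₀} f (x)`, the supremum over
cubes `Q` with `x ∈ Q ⊆ Q₀` of `inf_c inf {α ≥ 0 : |{y ∈ Q : |f(y) - c| > α}| < s|Q|}`. -/
def localSharp (n : ℕ) (s : ℝ) (Q₀ : Set (Fin n → ℝ)) (f : (Fin n → ℝ) → ℝ)
    (x : Fin n → ℝ) : ℝ≥0∞ :=
  ⨆ (c : Fin n → ℝ) (l : ℝ) (_ : 0 < l) (_ : x ∈ cube n c l) (_ : cube n c l ⊆ Q₀),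
    ⨅ (a : ℝ), sInf {α : ℝ≥0∞ |
      volume {y ∈ cube n c l | α < ENNReal.ofReal |f y - a|} <
        ENNReal.ofReal s * volume (cube n c l)}

/-- `T` is of weak type `(r, q)`: `|{|Tf| > λ}| ≤ (C λ⁻¹ ‖f‖_{L^r})^q`. -/
def WeakType (n : ℕ) (T : ((Fin n → ℝ) → ℝ) → (Fin n → ℝ) → ℝ) (r q : ℝ) : Prop :=
  ∃ C : ℝ, 0 < C ∧ ∀ (f : (Fin n → ℝ) → ℝ) (lam : ℝ), 0 < lam →
    volume {x | lam < |T f x|} ≤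
      (ENNReal.ofReal (C / lam) * (∫⁻ y, ENNReal.ofReal |f y| ^ r) ^ (1 / r)) ^ q

/-- `cn` is a dimensional constant for which `|x-x'|/|x-y| ≤ cn 2^{-m}`
whenever `x, x' ∈ Q` and `y ∉ 2^m Q`. -/
def DimConst (n : ℕ) (cn : ℝ) : Prop :=
  0 < cn ∧ ∀ (c : Fin n → ℝ) (l : ℝ), 0 < l → ∀ m : ℕ, 1 ≤ m →
    ∀ x x' y, x ∈ cube n c l → x' ∈ cube n c l → y ∉ cube n c (2 ^ m * l) →
      ‖x - x'‖ ≤ cn * 2 ^ (-(m : ℝ)) * ‖x - y‖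

/-- Dini-type smoothness condition for the kernel `k` of a fractional type operator
of order `γ`, with modulus `ω`. -/
def DiniKernel (n : ℕ) (γ : ℝ) (k : (Fin n → ℝ) → (Fin n → ℝ) → ℝ)
    (ω : ℝ → ℝ) (cn : ℝ) : Prop :=
  (∀ ⦃s t : ℝ⦄, 0 < s → s ≤ t → ω s ≤ ω t) ∧ (∀ t, 0 < t → 0 ≤ ω t) ∧
  IntegrableOn (fun t => ω (cn * t) / t) (Set.Ioo (0 : ℝ) 1) ∧
  ∃ C > 0, ∀ (c : Fin n → ℝ) (l : ℝ), 0 < l →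
    ∀ x x' y, x ∈ cube n c l → x' ∈ cube n c l → y ∉ cube n c (2 * l) →
      |k x y - k x' y| ≤
        C * ‖x - y‖ ^ (-((n : ℝ) * (1 - γ))) * ω (‖x - x'‖ / ‖x - y‖)

/-- The (maximal) median of `g` over the cube `Q(c,l)` with parameter `t`. -/
def medianOn (n : ℕ) (g : (Fin n → ℝ) → ℝ) (t : ℝ) (c : Fin n → ℝ) (l : ℝ) : ℝ :=
  sSup {M : ℝ | volume {y ∈ cube n c l | g y < M} ≤ ENNReal.ofReal t * volume (cube n c l)}

/-- `m♯_f(1-s, Q) = inf_a m_{|f-a|}(1-s, Q)`. -/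
def sharpMedianOn (n : ℕ) (f : (Fin n → ℝ) → ℝ) (s : ℝ) (c : Fin n → ℝ) (l : ℝ) : ℝ :=
  ⨅ a : ℝ, medianOn n (fun y => |f y - a|) (1 - s) c l

/-- `Φ` satisfies condition `C`. -/
def CondC (Φ : ℝ → ℝ) : Prop :=
  Continuous Φ ∧ MonotoneOn Φ (Set.Ici 0) ∧ Φ 0 = 0 ∧
    ∃ c > 0, ∀ t > 0, Φ (2 * t) ≤ c * Φ t

/-- A weight: nonnegative and locally integrable. -/
def IsWeight (n : ℕ) (w : (Fin n → ℝ) → ℝ) : Prop :=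
  (∀ x, 0 ≤ w x) ∧ LocallyIntegrable w volume

/-- The pair of weights `(w, v)` satisfies condition `F`. -/
def CondF (n : ℕ) (w v : (Fin n → ℝ) → ℝ) : Prop :=
  ∃ c > 0, ∃ β > 0, ∃ α : ℝ, 0 < α ∧ α < 1 ∧
    ∀ (cc : Fin n → ℝ) (l : ℝ), 0 < l → ∀ E : Set (Fin n → ℝ),
      MeasurableSet E → E ⊆ cube n cc l →
      volume E ≤ ENNReal.ofReal α * volume (cube n cc l) →
      ∫ x in E, w x ≤
        c * ((volume E).toReal / (volume (cube n cc l)).toReal) ^ β *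
          ∫ x in cube n cc l \ E, v x

/-- A bounded, compactly supported, measurable function. -/
def NiceFun (n : ℕ) (f : (Fin n → ℝ) → ℝ) : Prop :=
  Measurable f ∧ HasCompactSupport f ∧ ∃ M : ℝ, ∀ x, |f x| ≤ M

/-- `m_g(t, Q₀) → 0` as the cubes `Q₀` increase to `ℝⁿ`. -/
def MedianTendstoZero (n : ℕ) (g : (Fin n → ℝ) → ℝ) (t : ℝ) : Prop :=
  ∀ ε > 0, ∃ R > 0, ∀ (c : Fin n → ℝ) (l : ℝ), 0 < l →
    cube n (fun _ => 0) R ⊆ cube n c l → |medianOn n g t c l| < ε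

/-- A Young function. -/
def IsYoung (Φ : ℝ → ℝ) : Prop :=
  ConvexOn ℝ (Set.Ici 0) Φ ∧ Continuous Φ ∧ MonotoneOn Φ (Set.Ici 0) ∧ Φ 0 = 0 ∧
  (∃ c > 0, ∀ t > 0, Φ (2 * t) ≤ c * Φ t) ∧
  Tendsto (fun t => Φ t / t) atTop atTop

/-- Generalized inverse of a Young function. -/
def youngInv (Φ : ℝ → ℝ) (t : ℝ) : ℝ :=
  sInf {s : ℝ | 0 ≤ s ∧ t ≤ Φ s}

/-- The conjugate Young function `Ā(s) = sup_{t>0} (st - A(t))`. -/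
def conjYoung (A : ℝ → ℝ) (s : ℝ) : ℝ :=
  sSup {v : ℝ | ∃ t > 0, v = s * t - A t}

/-- Unnormalized Luxemburg norm `‖f‖_{L^Φ_Q}`. -/
def luxNorm (n : ℕ) (Φ : ℝ → ℝ) (Q : Set (Fin n → ℝ)) (f : (Fin n → ℝ) → ℝ) : ℝ≥0∞ :=
  sInf {lam : ℝ≥0∞ | 0 < lam ∧
    ∫⁻ y in Q, ENNReal.ofReal (Φ (|f y| / lam.toReal)) ≤ 1}

/-- Normalized Luxemburg average `‖f‖_{L^A(Q)}` (i.e. `(1/|Q|)∫_Q A(|f|/λ) ≤ 1`). -/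
def luxAvg (n : ℕ) (A : ℝ → ℝ) (Q : Set (Fin n → ℝ)) (f : (Fin n → ℝ) → ℝ) : ℝ≥0∞ :=
  sInf {lam : ℝ≥0∞ | 0 < lam ∧
    ∫⁻ y in Q, ENNReal.ofReal (A (|f y| / lam.toReal)) ≤ volume Q}

/-- Luxemburg norm on all of `ℝⁿ`. -/
def luxNormGlobal (n : ℕ) (Φ : ℝ → ℝ) (f : (Fin n → ℝ) → ℝ) : ℝ≥0∞ :=
  sInf {lam : ℝ≥0∞ | 0 < lam ∧
    ∫⁻ y, ENNReal.ofReal (Φ (|f y| / lam.toReal)) ≤ 1}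

/-- Orlicz fractional maximal function `M_{γ,A} f(x) = sup_{Q ∋ x} |Q|^γ ‖f‖_{L^A(Q)}`. -/
def orliczMax (n : ℕ) (γ : ℝ) (A : ℝ → ℝ) (f : (Fin n → ℝ) → ℝ) (x : Fin n → ℝ) : ℝ≥0∞ :=
  ⨆ (c : Fin n → ℝ) (l : ℝ) (_ : 0 < l) (_ : x ∈ cube n c l),
    volume (cube n c l) ^ γ * luxAvg n A (cube n c l) f

/-- Generalized Orlicz–Morrey norm `‖f‖_{𝓜^{Φ,φ}}`. -/
def morreyNorm (n : ℕ) (Φ : ℝ → ℝ) (φ : (Fin n → ℝ) → ℝ → ℝ) (f : (Fin n → ℝ) → ℝ) : ℝ≥0∞ :=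
  ⨆ (x : Fin n → ℝ) (l : ℝ) (_ : 0 < l),
    ENNReal.ofReal ((1 / φ x l) * youngInv Φ (1 / (volume (cube n x l)).toReal)) *
      luxNorm n Φ (cube n x l) f

/-- Generalized Orlicz–Campanato seminorm `‖f‖_{𝓛^{Φ,φ}}`. -/
def campNorm (n : ℕ) (Φ : ℝ → ℝ) (φ : (Fin n → ℝ) → ℝ → ℝ) (f : (Fin n → ℝ) → ℝ) : ℝ≥0∞ :=
  ⨆ (x : Fin n → ℝ) (l : ℝ) (_ : 0 < l),
    ENNReal.ofReal ((1 / φ x l) * youngInv Φ (1 / (volume (cube n x l)).toReal)) *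
      ⨅ a : ℝ, luxNorm n Φ (cube n x l) (fun y => f y - a)

/-- The class `B_p` of Young functions. -/
def Bp (p : ℝ) (A : ℝ → ℝ) : Prop :=
  ∃ c > 0, IntegrableOn (fun t => A t / t ^ p / t) (Set.Ioi c)

/-- The class `B_{α,p}` of Cruz-Uribe and Moen (with `B_{0,p} = B_p`). -/
def Balphap (α p : ℝ) (A : ℝ → ℝ) : Prop :=
  if α = 0 then Bp p A
  else ∃ c > 0,
    IntegrableOn (fun t => A t ^ ((1 / p - α)⁻¹ / p) / t ^ (1 / p - α)⁻¹ / t) (Set.Ioi c)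

/-- The Riesz-potential-type integral `∫ |f(y)| |x-y|^{-n(1-γ)} dy`, valued in `ℝ≥0∞`. -/
def rieszPotential (n : ℕ) (γ : ℝ) (f : (Fin n → ℝ) → ℝ) (x : Fin n → ℝ) : ℝ≥0∞ :=
  ∫⁻ y, ENNReal.ofReal |f y| * ENNReal.ofReal (‖x - y‖ ^ (-((n : ℝ) * (1 - γ))))

end

/-!
Split `(2Q)ᶜ` into the dyadic annuli `2^{i+2}Q \ 2^{i+1}Q`. On the `i`-th annulus
`|z - y| ≳ 2^i ℓ(Q)`, so the Dini condition bounds `|k(z,y) - k(x_Q,y)|` by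
`ω(cₙ 2^{-i-1}) |2^{i+2}Q|^{γ-1}`, and integrating `|f|` against this over `2^{i+2}Q ∋ y₀`
costs at most `M_γ f(y₀)`. Since `ω` is nondecreasing,
`ω(cₙ 2^{-i-1}) ≤ 2 ∫_{2^{-i-1}}^{2^{-i}} ω(cₙ t) dt/t`, so the sum over `i` is at most
`2 ∫₀¹ ω(cₙ t) dt/t`.
-/

open Metric

section Cube

variable {n : ℕ}

lemma cube_eq_closedBall (c : Fin n → ℝ) {l : ℝ} (hl : 0 ≤ l) :
    cube n c l = closedBall c (l / 2) := by
  ext y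
  simp only [cube, mem_ofPred_eq, mem_closedBall, dist_pi_le_iff (by positivity : 0 ≤ l / 2),
    Real.dist_eq]

lemma mem_cube_iff_norm_sub_le (c : Fin n → ℝ) {l : ℝ} (hl : 0 ≤ l) {y : Fin n → ℝ} :
    y ∈ cube n c l ↔ ‖y - c‖ ≤ l / 2 := by
  rw [cube_eq_closedBall c hl, mem_closedBall_iff_norm]

lemma center_mem_cube (c : Fin n → ℝ) {l : ℝ} (hl : 0 ≤ l) : c ∈ cube n c l := by
  rw [mem_cube_iff_norm_sub_le c hl, sub_self, norm_zero]
  positivity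

lemma cube_subset_cube (c : Fin n → ℝ) {l₁ l₂ : ℝ} (h : l₁ ≤ l₂) :
    cube n c l₁ ⊆ cube n c l₂ :=
  fun _ hy i => (hy i).trans (by linarith)

lemma isClosed_cube (c : Fin n → ℝ) (l : ℝ) : IsClosed (cube n c l) := by
  simp only [cube, ofPred_forall]
  exact isClosed_iInter fun i => isClosed_le (by fun_prop) continuous_const

lemma volume_cube (c : Fin n → ℝ) {l : ℝ} (hl : 0 ≤ l) :
    volume (cube n c l) = ENNReal.ofReal (l ^ n) := by
  rw [cube_eq_closedBall c hl, Real.volume_pi_closedBall c (by positivity), Fintype.card_fin,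
    mul_div_cancel₀ l two_ne_zero]

lemma sub_div_two_lt_norm_sub {c z y : Fin n → ℝ} {l L : ℝ} (hl : 0 ≤ l) (hL : 0 ≤ L)
    (hz : z ∈ cube n c l) (hy : y ∉ cube n c L) : (L - l) / 2 < ‖z - y‖ := by
  rw [mem_cube_iff_norm_sub_le c hl] at hz
  rw [mem_cube_iff_norm_sub_le c hL, not_le] at hy
  have := norm_sub_le_norm_sub_add_norm_sub y z c
  rw [norm_sub_rev y z] at this
  linarith

end Cube

section DyadicAnnulus

variable {n : ℕ}

def dyadicAnnulus (n : ℕ) (c : Fin n → ℝ) (l : ℝ) (i : ℕ) : Set (Fin n → ℝ) :=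
  cube n c (2 ^ (i + 2) * l) \ cube n c (2 ^ (i + 1) * l)

lemma measurableSet_dyadicAnnulus (c : Fin n → ℝ) (l : ℝ) (i : ℕ) :
    MeasurableSet (dyadicAnnulus n c l i) :=
  (isClosed_cube c _).measurableSet.diff (isClosed_cube c _).measurableSet

lemma compl_cube_two_mul_subset_iUnion_dyadicAnnulus (c : Fin n → ℝ) {l : ℝ} (hl : 0 < l) :
    (cube n c (2 * l))ᶜ ⊆ ⋃ i, dyadicAnnulus n c l i := by
  intro y hy
  set s : ℕ → Set (Fin n → ℝ) := fun m => cube n c (2 ^ (m + 1) * l)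
  have hs : Monotone s := fun i j hij => cube_subset_cube c (by gcongr; norm_num)
  have hyU : y ∈ ⋃ m, s m := by
    obtain ⟨m, hm⟩ := pow_unbounded_of_one_lt (‖y - c‖ / l) one_lt_two
    rw [div_lt_iff₀ hl] at hm
    refine mem_iUnion.2 ⟨m, (mem_cube_iff_norm_sub_le c (by positivity)).2 ?_⟩
    rw [pow_succ]
    linarith
  rw [← iUnion_disjointed, mem_iUnion] at hyU
  obtain ⟨_ | i, hi⟩ := hyU
  · exact absurd (by simpa [s] using hi) hy
  · exact mem_iUnion.2 ⟨i, by rwa [hs.disjointed_add_one] at hi⟩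

end DyadicAnnulus

section FracMax

variable {n : ℕ} {γ : ℝ} {f : (Fin n → ℝ) → ℝ}

lemma rpow_mul_lintegral_cube_le_fracMax {c y : Fin n → ℝ} {s : ℝ} (hs : 0 < s)
    (hy : y ∈ cube n c s) :
    ENNReal.ofReal (s ^ (-((n : ℝ) * (1 - γ)))) * ∫⁻ x in cube n c s, ‖f x‖ₑ ≤
      fracMax n γ 1 f y := by
  have hvol : volume (cube n c s) ^ γ * (volume (cube n c s))⁻¹ =
      ENNReal.ofReal (s ^ (-((n : ℝ) * (1 - γ)))) := by
    have hsn : 0 < s ^ n := by positivity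
    rw [volume_cube c hs.le, ENNReal.ofReal_rpow_of_pos hsn, ← ENNReal.ofReal_inv_of_pos hsn,
      ← ENNReal.ofReal_mul (by positivity), ← div_eq_mul_inv, ← Real.rpow_sub_one hsn.ne',
      ← Real.rpow_natCast, ← Real.rpow_mul hs.le]
    ring_nf
  calc ENNReal.ofReal (s ^ (-((n : ℝ) * (1 - γ)))) * ∫⁻ x in cube n c s, ‖f x‖ₑ
      = volume (cube n c s) ^ γ *
          ((volume (cube n c s))⁻¹ * ∫⁻ x in cube n c s, ENNReal.ofReal |f x| ^ (1 : ℝ)) ^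
            (1 / (1 : ℝ)) := by
        simp only [div_one, ENNReal.rpow_one, ← mul_assoc, hvol, Real.enorm_eq_ofReal_abs]
    _ ≤ fracMax n γ 1 f y := le_iSup₂_of_le c s (le_iSup₂_of_le hs hy le_rfl)

lemma setLIntegral_enorm_mul_le_fracMax {K : (Fin n → ℝ) → ℝ} {A : Set (Fin n → ℝ)}
    {c y : Fin n → ℝ} {a s : ℝ} (hA : MeasurableSet A) (hAs : A ⊆ cube n c s) (hs : 0 < s)
    (hy : y ∈ cube n c s) (hK : ∀ x ∈ A, |K x| ≤ a * s ^ (-((n : ℝ) * (1 - γ)))) :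
    ∫⁻ x in A, ‖K x‖ₑ * ‖f x‖ₑ ≤ ENNReal.ofReal a * fracMax n γ 1 f y :=
  calc ∫⁻ x in A, ‖K x‖ₑ * ‖f x‖ₑ
      ≤ ∫⁻ x in A, ENNReal.ofReal (a * s ^ (-((n : ℝ) * (1 - γ)))) * ‖f x‖ₑ :=
        setLIntegral_mono' hA fun x hx => by
          rw [Real.enorm_eq_ofReal_abs (K x)]
          gcongr
          exact hK x hx
    _ = ENNReal.ofReal a *
          (ENNReal.ofReal (s ^ (-((n : ℝ) * (1 - γ)))) * ∫⁻ x in A, ‖f x‖ₑ) := by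
        rw [lintegral_const_mul' _ _ ENNReal.ofReal_ne_top, ENNReal.ofReal_mul' (by positivity),
          mul_assoc]
    _ ≤ ENNReal.ofReal a *
          (ENNReal.ofReal (s ^ (-((n : ℝ) * (1 - γ)))) * ∫⁻ x in cube n c s, ‖f x‖ₑ) := by
        gcongr
    _ ≤ ENNReal.ofReal a * fracMax n γ 1 f y := by
        gcongr
        exact rpow_mul_lintegral_cube_le_fracMax hs hy

end FracMax

lemma tsum_ofReal_dyadic_le_lintegral {φ : ℝ → ℝ}
    (hmono : ∀ ⦃s t : ℝ⦄, 0 < s → s ≤ t → φ s ≤ φ t) (hnn : ∀ t, 0 < t → 0 ≤ φ t) :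
    ∑' i : ℕ, ENNReal.ofReal (φ (2 ^ (i + 1))⁻¹) ≤
      2 * ∫⁻ t in Ioo 0 1, ENNReal.ofReal (φ t / t) := by
  set J : ℕ → Set ℝ := fun i => Ioo (2 ^ (i + 1))⁻¹ (2 ^ i)⁻¹
  have hanti : Antitone fun i : ℕ => ((2 : ℝ) ^ i)⁻¹ := fun i j hij =>
    inv_anti₀ (by positivity) (pow_le_pow_right₀ one_le_two hij)
  have hJ : ∀ i, ENNReal.ofReal (φ (2 ^ (i + 1))⁻¹) ≤
      2 * ∫⁻ t in J i, ENNReal.ofReal (φ t / t) := by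
    intro i
    set a : ℝ := (2 ^ (i + 1))⁻¹ with ha
    have ha0 : 0 < a := by positivity
    have hvol : volume (J i) = ENNReal.ofReal a := by
      rw [Real.volume_Ioo, ha, pow_succ]
      congr 1
      field_simp
      ring
    have hbound : ∀ t ∈ J i, ENNReal.ofReal (φ a * 2 ^ i) ≤ ENNReal.ofReal (φ t / t) := by
      intro t ht
      have ht0 : 0 < t := ha0.trans ht.1
      apply ENNReal.ofReal_le_ofReal
      rw [div_eq_mul_inv]
      exact mul_le_mul (hmono ha0 ht.1.le) ((le_inv_comm₀ (by positivity) ht0).2 ht.2.le)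
        (by positivity) (hnn t ht0)
    calc ENNReal.ofReal (φ a)
        = 2 * (ENNReal.ofReal (φ a * 2 ^ i) * ENNReal.ofReal a) := by
          rw [← ENNReal.ofReal_mul (mul_nonneg (hnn a ha0) (by positivity)),
            ← ENNReal.ofReal_ofNat 2, ← ENNReal.ofReal_mul zero_le_two, ha, pow_succ]
          congr 1
          field_simp
      _ = 2 * ∫⁻ _ in J i, ENNReal.ofReal (φ a * 2 ^ i) := by rw [setLIntegral_const, hvol]
      _ ≤ 2 * ∫⁻ t in J i, ENNReal.ofReal (φ t / t) :=
          mul_le_mul_right (setLIntegral_mono' measurableSet_Ioo hbound) 2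
  have hdisj : Pairwise (Function.onFun Disjoint J) := by
    simpa only [Order.succ_eq_add_one] using hanti.pairwise_disjoint_on_Ioo_succ
  calc ∑' i : ℕ, ENNReal.ofReal (φ (2 ^ (i + 1))⁻¹)
      ≤ ∑' i, 2 * ∫⁻ t in J i, ENNReal.ofReal (φ t / t) := ENNReal.tsum_le_tsum hJ
    _ = 2 * ∫⁻ t in ⋃ i, J i, ENNReal.ofReal (φ t / t) := by
        rw [ENNReal.tsum_mul_left, lintegral_iUnion (fun _ => measurableSet_Ioo) hdisj]
    _ ≤ 2 * ∫⁻ t in Ioo 0 1, ENNReal.ofReal (φ t / t) := by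
        gcongr
        exact iUnion_subset fun i =>
          Ioo_subset_Ioo (by positivity) (inv_le_one_of_one_le₀ (one_le_pow₀ one_le_two))

section DiniKernel

variable {n : ℕ} {γ : ℝ} {k : (Fin n → ℝ) → (Fin n → ℝ) → ℝ} {ω : ℝ → ℝ} {cn : ℝ}

lemma DiniKernel.tsum_ofReal_le (hk : DiniKernel n γ k ω cn) (hcn0 : 0 < cn) :
    ∑' i : ℕ, ENNReal.ofReal (ω (cn * (2 ^ (i + 1))⁻¹)) ≤
      ENNReal.ofReal (2 * ∫ t in Ioo (0 : ℝ) 1, ω (cn * t) / t) := by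
  obtain ⟨hmono, hnn, hint, -⟩ := hk
  have hpos : ∀ t ∈ Ioo (0 : ℝ) 1, 0 ≤ ω (cn * t) / t := fun t ht =>
    div_nonneg (hnn _ (mul_pos hcn0 ht.1)) ht.1.le
  rw [ENNReal.ofReal_mul zero_le_two, ENNReal.ofReal_ofNat, ofReal_integral_eq_lintegral_ofReal hint
    ((ae_restrict_iff' measurableSet_Ioo).2 (ae_of_all _ hpos))]
  exact tsum_ofReal_dyadic_le_lintegral (fun s t hs hst => hmono (mul_pos hcn0 hs)
    (mul_le_mul_of_nonneg_left hst hcn0.le)) fun t ht => hnn _ (mul_pos hcn0 ht)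

lemma DiniKernel.exists_abs_sub_le_on_dyadicAnnulus (hk : DiniKernel n γ k ω cn)
    (hcn : DimConst n cn) (hγ : γ ≤ 1) :
    ∃ C > 0, ∀ (c : Fin n → ℝ) (l : ℝ), 0 < l → ∀ z ∈ cube n c l, ∀ (i : ℕ),
      ∀ y ∈ dyadicAnnulus n c l i, |k z y - k c y| ≤
        C * ω (cn * (2 ^ (i + 1))⁻¹) * (2 ^ (i + 2) * l) ^ (-((n : ℝ) * (1 - γ))) := by
  obtain ⟨hmono, hnn, -, C, hC, hker⟩ := hk
  refine ⟨C * 8 ^ ((n : ℝ) * (1 - γ)), by positivity,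
    fun c l hl z hz i y ⟨_, hy⟩ => ?_⟩
  have hc := center_mem_cube c hl.le
  have hω0 : 0 ≤ ω (cn * (2 ^ (i + 1))⁻¹) := hnn _ (mul_pos hcn.1 (by positivity))
  rcases eq_or_ne z c with rfl | hzc
  · rw [sub_self, abs_zero]
    positivity
  set s : ℝ := 2 ^ (i + 2) * l
  have h2i : (2 : ℝ) ≤ 2 ^ (i + 1) := le_self_pow₀ one_le_two (by omega)
  have hy2 : y ∉ cube n c (2 * l) := fun h => hy (cube_subset_cube c (by gcongr) h)
  have hdist : s / 8 ≤ ‖z - y‖ := by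
    have := sub_div_two_lt_norm_sub hl.le (by positivity) hz hy
    have hs : s / 8 = 2 ^ (i + 1) * l / 4 := by simp only [s, pow_succ]; ring
    nlinarith
  have hzy : 0 < ‖z - y‖ := lt_of_lt_of_le (by positivity) hdist
  have hω : ω (‖z - c‖ / ‖z - y‖) ≤ ω (cn * (2 ^ (i + 1))⁻¹) := by
    refine hmono (div_pos (norm_pos_iff.2 (sub_ne_zero.2 hzc)) hzy) ?_
    have := hcn.2 c l hl (i + 1) (by omega) z c y hz hc hy
    rw [Real.rpow_neg zero_le_two, Real.rpow_natCast] at this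
    rwa [div_le_iff₀ hzy]
  have hpow : ‖z - y‖ ^ (-((n : ℝ) * (1 - γ))) ≤
      8 ^ ((n : ℝ) * (1 - γ)) * s ^ (-((n : ℝ) * (1 - γ))) :=
    calc ‖z - y‖ ^ (-((n : ℝ) * (1 - γ)))
        ≤ (s / 8) ^ (-((n : ℝ) * (1 - γ))) :=
          Real.rpow_le_rpow_of_nonpos (by positivity) hdist
            (neg_nonpos.2 (mul_nonneg n.cast_nonneg (by linarith)))
      _ = 8 ^ ((n : ℝ) * (1 - γ)) * s ^ (-((n : ℝ) * (1 - γ))) := by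
          rw [Real.div_rpow (by positivity) (by norm_num),
            Real.rpow_neg (by norm_num : (0 : ℝ) ≤ 8), div_inv_eq_mul, mul_comm]
  calc |k z y - k c y| ≤ C * ‖z - y‖ ^ (-((n : ℝ) * (1 - γ))) * ω (‖z - c‖ / ‖z - y‖) :=
        hker c l hl z c y hz hc hy2
    _ ≤ C * (8 ^ ((n : ℝ) * (1 - γ)) * s ^ (-((n : ℝ) * (1 - γ)))) *
          ω (cn * (2 ^ (i + 1))⁻¹) := by
        gcongr
        exact hnn _ (div_pos (norm_pos_iff.2 (sub_ne_zero.2 hzc)) hzy)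
    _ = C * 8 ^ ((n : ℝ) * (1 - γ)) * ω (cn * (2 ^ (i + 1))⁻¹) *
          s ^ (-((n : ℝ) * (1 - γ))) := by ring

end DiniKernel

lemma ofReal_abs_setIntegral_mul_sub_le {α : Type*} [MeasurableSpace α] {μ : Measure α}
    {S : Set α} {K₁ K₂ f : α → ℝ} (h₁ : IntegrableOn (fun y => K₁ y * f y) S μ)
    (h₂ : IntegrableOn (fun y => K₂ y * f y) S μ) :
    ENNReal.ofReal |(∫ y in S, K₁ y * f y ∂μ) - ∫ y in S, K₂ y * f y ∂μ| ≤
      ∫⁻ y in S, ‖K₁ y - K₂ y‖ₑ * ‖f y‖ₑ ∂μ := by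
  rw [← integral_sub h₁ h₂, ← Real.enorm_eq_ofReal_abs]
  simpa only [← sub_mul, enorm_mul] using
    enorm_integral_le_lintegral_enorm fun y => K₁ y * f y - K₂ y * f y

lemma ENNReal.le_mul_biInf {α : Type*} {s : Set α} (hs : s.Nonempty) {K L : ℝ≥0∞} (hK : K ≠ ⊤)
    {g : α → ℝ≥0∞} (h : ∀ y ∈ s, L ≤ K * g y) : L ≤ K * ⨅ y ∈ s, g y := by
  rcases eq_or_ne K 0 with rfl | hK0
  · obtain ⟨y, hy⟩ := hs
    simpa using h y hy
  · simp_rw [ENNReal.mul_iInf_of_ne hK0 hK]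
    exact le_iInf₂ h

theorem far_part_oscillation_estimate_general
    (n : ℕ) (γ : ℝ) (hγ1 : γ < 1)
    (k : (Fin n → ℝ) → (Fin n → ℝ) → ℝ) (ω : ℝ → ℝ) (cn : ℝ)
    (hcn : DimConst n cn) (hk : DiniKernel n γ k ω cn) :
    ∃ c : ℝ, 0 < c ∧ ∀ (xQ : Fin n → ℝ) (l : ℝ), 0 < l →
      ∀ f : (Fin n → ℝ) → ℝ, LocallyIntegrable f volume →
        (∀ z ∈ cube n xQ l, IntegrableOn (fun y => k z y * f y) (cube n xQ (2 * l))ᶜ) →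
        ∀ z ∈ cube n xQ l,
          ENNReal.ofReal
              |(∫ y in (cube n xQ (2 * l))ᶜ, k z y * f y) -
                ∫ y in (cube n xQ (2 * l))ᶜ, k xQ y * f y| ≤
            ENNReal.ofReal (c * ∫ t in Set.Ioo (0 : ℝ) 1, ω (cn * t) / t) *
              ⨅ y ∈ cube n xQ l, fracMax n γ 1 f y := by
  obtain ⟨C, hC, hkernel⟩ := hk.exists_abs_sub_le_on_dyadicAnnulus hcn hγ1.le
  refine ⟨2 * C, by positivity, fun xQ l hl f _ hint z hz => ?_⟩
  refine ENNReal.le_mul_biInf ⟨z, hz⟩ ENNReal.ofReal_ne_top fun y₀ hy₀ => ?_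
  calc ENNReal.ofReal |(∫ y in (cube n xQ (2 * l))ᶜ, k z y * f y) -
        ∫ y in (cube n xQ (2 * l))ᶜ, k xQ y * f y|
      ≤ ∫⁻ y in (cube n xQ (2 * l))ᶜ, ‖k z y - k xQ y‖ₑ * ‖f y‖ₑ :=
        ofReal_abs_setIntegral_mul_sub_le (hint z hz) (hint xQ (center_mem_cube xQ hl.le))
    _ ≤ ∑' i, ∫⁻ y in dyadicAnnulus n xQ l i, ‖k z y - k xQ y‖ₑ * ‖f y‖ₑ :=
        (lintegral_mono_set (compl_cube_two_mul_subset_iUnion_dyadicAnnulus xQ hl)).trans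
          (lintegral_iUnion_le _ _)
    _ ≤ ∑' i : ℕ, ENNReal.ofReal C * ENNReal.ofReal (ω (cn * (2 ^ (i + 1))⁻¹)) *
          fracMax n γ 1 f y₀ := ENNReal.tsum_le_tsum fun i => by
        rw [← ENNReal.ofReal_mul hC.le]
        exact setLIntegral_enorm_mul_le_fracMax (measurableSet_dyadicAnnulus xQ l i) sdiff_subset
          (by positivity)
          (cube_subset_cube xQ (le_mul_of_one_le_left hl.le (one_le_pow₀ one_le_two)) hy₀)
          (hkernel xQ l hl z hz i)
    _ ≤ ENNReal.ofReal C * ENNReal.ofReal (2 * ∫ t in Ioo (0 : ℝ) 1, ω (cn * t) / t) *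
          fracMax n γ 1 f y₀ := by
        rw [ENNReal.tsum_mul_right, ENNReal.tsum_mul_left]
        gcongr
        exact hk.tsum_ofReal_le hcn.1
    _ = ENNReal.ofReal (2 * C * ∫ t in Ioo (0 : ℝ) 1, ω (cn * t) / t) * fracMax n γ 1 f y₀ := by
        rw [← ENNReal.ofReal_mul hC.le]
        ring_nf

/-- Estimate (2.6)/(2.7): for `f₂ = f·1_{(2Q)ᶜ}` and `z ∈ Q`,
`|Tf₂(z) - Tf₂(x_Q)| ≤ c (∫₀¹ ω(cₙ t) dt/t) inf_{y ∈ Q} M_γ f(y)`. -/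
theorem far_part_oscillation_estimate
    (n : ℕ) (hn : 1 ≤ n) (γ : ℝ) (hγ0 : 0 < γ) (hγ1 : γ < 1)
    (k : (Fin n → ℝ) → (Fin n → ℝ) → ℝ) (ω : ℝ → ℝ) (cn : ℝ)
    (hcn : DimConst n cn) (hk : DiniKernel n γ k ω cn) :
    ∃ c : ℝ, 0 < c ∧ ∀ (xQ : Fin n → ℝ) (l : ℝ), 0 < l →
      ∀ f : (Fin n → ℝ) → ℝ, LocallyIntegrable f volume →
        (∀ z ∈ cube n xQ l, IntegrableOn (fun y => k z y * f y) (cube n xQ (2 * l))ᶜ) →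
        ∀ z ∈ cube n xQ l,
          ENNReal.ofReal
              |(∫ y in (cube n xQ (2 * l))ᶜ, k z y * f y) -
                ∫ y in (cube n xQ (2 * l))ᶜ, k xQ y * f y| ≤
            ENNReal.ofReal (c * ∫ t in Set.Ioo (0 : ℝ) 1, ω (cn * t) / t) *
              ⨅ y ∈ cube n xQ l, fracMax n γ 1 f y :=
  far_part_oscillation_estimate_general n γ hγ1 k ω cn hcn hk
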